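/- Let f : A → B be a surjective morphism of Poincaré duality algebras of dimensions m and n with shriek map f_!. If x ∈ A is a cocycle with f(x) = ω_B a representative of the fundamental class of B, then f_!(1) represents a class in H^{m−n}(A); moreover if [x] ≠ 0 in H^n(A), then [f_!(1)] ≠ 0 in H^{m−n}(A). -/
import Mathlib


/-- Let `f : A → B` be a surjective morphism of Poincaré duality
dg algebras of formal dimensions `m`, `n` with shriek map `f_! = g`
(`π_A ∘ f_! = f^# ∘ π_B`).  If `x ∈ A` is a cocycle with `f x = ω_B` a
representative of the fundamental class of `B`, then `f_!(1)` is a cocycle of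
degree `m - n`, and if `[x] ≠ 0` in `H^n(A)` then `[f_!(1)] ≠ 0` in
`H^{m-n}(A)`. -/
theorem stmt18 {A B : Type} [Ring A] [Ring B] [Algebra ℚ A] [Algebra ℚ B]
    [FiniteDimensional ℚ A] [FiniteDimensional ℚ B]
    (𝒜 : ℕ → Submodule ℚ A) (hA : DirectSum.IsInternal 𝒜) (honeA : (1 : A) ∈ 𝒜 0)
    (hmulA : ∀ i j, ∀ x ∈ 𝒜 i, ∀ y ∈ 𝒜 j, x * y ∈ 𝒜 (i + j))
    (dA : A →ₗ[ℚ] A) (hdA : ∀ i, ∀ x ∈ 𝒜 i, dA x ∈ 𝒜 (i + 1)) (hdA2 : ∀ x, dA (dA x) = 0)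
    (hLA : ∀ i, ∀ x ∈ 𝒜 i, ∀ y, dA (x * y) = dA x * y + ((-1 : ℚ) ^ i) • (x * dA y))
    (ℬ : ℕ → Submodule ℚ B) (hB : DirectSum.IsInternal ℬ) (honeB : (1 : B) ∈ ℬ 0)
    (hmulB : ∀ i j, ∀ x ∈ ℬ i, ∀ y ∈ ℬ j, x * y ∈ ℬ (i + j))
    (dB : B →ₗ[ℚ] B) (hdB : ∀ i, ∀ x ∈ ℬ i, dB x ∈ ℬ (i + 1)) (hdB2 : ∀ x, dB (dB x) = 0)
    (m n : ℕ) (hnm : n ≤ m)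
    (εA : A →ₗ[ℚ] ℚ) (hεAdeg : ∀ i, i ≠ m → ∀ x ∈ 𝒜 i, εA x = 0)
    (hεAd : ∀ x ∈ 𝒜 (m - 1), εA (dA x) = 0)
    (hndA : ∀ k, ∀ x ∈ 𝒜 k, (∀ y ∈ 𝒜 (m - k), εA (x * y) = 0) → x = 0)
    (εB : B →ₗ[ℚ] ℚ) (hεBdeg : ∀ i, i ≠ n → ∀ x ∈ ℬ i, εB x = 0)
    (hεBd : ∀ x ∈ ℬ (n - 1), εB (dB x) = 0)
    (hndB : ∀ k, ∀ x ∈ ℬ k, (∀ y ∈ ℬ (n - k), εB (x * y) = 0) → x = 0)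
    (f : A →ₐ[ℚ] B) (hfsurj : Function.Surjective f)
    (hfdeg : ∀ i, ∀ x ∈ 𝒜 i, f x ∈ ℬ i) (hfd : ∀ x, f (dA x) = dB (f x))
    -- the shriek map
    (g : B →ₗ[ℚ] A)
    (hgπ : ∀ (b : B) (y : A), εA (g b * y) = εB (b * f y))
    (hgmod : ∀ (a : A) (b : B), g (f a * b) = a * g b)
    -- `x` is a cocycle mapping to a representative `ω_B` of the fundamental class
    (x : A) (hxdeg : x ∈ 𝒜 n) (hxd : dA x = 0)
    (hxωB : f x ∈ ℬ n) (hωBd : dB (f x) = 0) (hωBfund : εB (f x) ≠ 0) :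
    (g 1 ∈ 𝒜 (m - n) ∧ dA (g 1) = 0) ∧
      ((∀ u : A, dA u ≠ x) → ∀ w : A, dA w ≠ g 1) := by

  classical
  letI : DirectSum.Decomposition 𝒜 := hA.chooseDecomposition
  have hg1 : ∀ y : A, εA (g 1 * y) = εB (f y) := by
    intro y; rw [hgπ 1 y, one_mul]
  set c := DirectSum.decompose 𝒜 (g 1) with hc
  have hsum : (∑ j ∈ c.support, ((c j : A))) = g 1 :=
    DirectSum.sum_support_decompose 𝒜 (g 1)
  -- components of g 1 in degrees ≠ m - n vanish
  have hcomp : ∀ i, i ≠ m - n → ((c i : A)) = 0 := by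
    intro i hi
    refine hndA i _ (c i).2 ?_
    intro y hy
    by_cases him : i ≤ m
    · have hsplit : εA (g 1 * y) = ∑ j ∈ c.support, εA ((c j : A) * y) := by
        conv_lhs => rw [← hsum]
        rw [Finset.sum_mul, map_sum]
      have hred : (∑ j ∈ c.support, εA ((c j : A) * y)) = εA ((c i : A) * y) := by
        refine Finset.sum_eq_single i ?_ ?_
        · intro j _ hj
          refine hεAdeg (j + (m - i)) (by omega) _ (hmulA _ _ _ (c j).2 _ hy)
        · intro hi'
          have : (c i : A) = 0 := by
            simpa using DFinsupp.notMem_support_iff.mp hi'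
          rw [this, zero_mul, map_zero]
      have hfy : εB (f y) = 0 :=
        hεBdeg (m - i) (by omega) _ (hfdeg _ _ hy)
      rw [← hred, ← hsplit, hg1, hfy]
    · exact hεAdeg (i + (m - i)) (by omega) _ (hmulA _ _ _ (c i).2 _ hy)
  have hmem : g 1 ∈ 𝒜 (m - n) := by
    rw [← hsum]
    refine Submodule.sum_mem _ ?_
    intro j _
    by_cases hj : j = m - n
    · exact hj ▸ (c j).2
    · rw [hcomp j hj]; exact zero_mem _
  -- dA (g 1) = 0
  have hd0 : dA (g 1) = 0 := by
    refine hndA (m - n + 1) _ (hdA _ _ hmem) ?_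
    intro y hy
    by_cases hn : n = 0
    · exact hεAdeg (m - n + 1 + (m - (m - n + 1))) (by omega) _
        (hmulA _ _ _ (hdA _ _ hmem) _ hy)
    · have hL := hLA (m - n) (g 1) hmem y
      have h1 : εA (dA (g 1 * y)) = 0 := by
        have : g 1 * y ∈ 𝒜 (m - n + (m - (m - n + 1))) := hmulA _ _ _ hmem _ hy
        have heq : m - n + (m - (m - n + 1)) = m - 1 := by omega
        exact hεAd _ (heq ▸ this)
      have h2 : εA (g 1 * dA y) = 0 := by
        rw [hg1, hfd]
        have hy' : f y ∈ ℬ (n - 1) := by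
          have : m - (m - n + 1) = n - 1 := by omega
          exact hfdeg _ _ (this ▸ hy)
        exact hεBd _ hy'
      have : εA (dA (g 1) * y) = εA (dA (g 1 * y)) - ((-1 : ℚ) ^ (m - n)) * εA (g 1 * dA y) := by
        rw [hL]; simp [mul_comm]
      rw [this, h1, h2]; ring
  refine ⟨⟨hmem, hd0⟩, ?_⟩
  intro _ w hw
  -- coboundaries pair trivially with the cocycle x
  have hzero : ∀ i, ∀ v ∈ 𝒜 i, εA (dA v * x) = 0 := by
    intro i v hv
    have hL := hLA i v hv x
    rw [hxd, mul_zero, smul_zero, add_zero] at hL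
    rw [← hL]
    by_cases him : i + n + 1 = m
    · have : v * x ∈ 𝒜 (m - 1) := by
        have := hmulA _ _ _ hv _ hxdeg
        have heq : i + n = m - 1 := by omega
        exact heq ▸ this
      exact hεAd _ this
    · exact hεAdeg (i + n + 1) him _ (hdA _ _ (hmulA _ _ _ hv _ hxdeg))
  have hall : εA (dA w * x) = 0 := by
    set cw := DirectSum.decompose 𝒜 w with hcw
    have hwsum : (∑ j ∈ cw.support, ((cw j : A))) = w :=
      DirectSum.sum_support_decompose 𝒜 w
    calc εA (dA w * x) = ∑ j ∈ cw.support, εA (dA (cw j : A) * x) := by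
          conv_lhs => rw [← hwsum]
          rw [map_sum, Finset.sum_mul, map_sum]
      _ = 0 := Finset.sum_eq_zero fun j _ => hzero j _ (cw j).2
  rw [hw, hg1] at hall
  exact hωBfund hall
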